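/- For any continuous MHR distribution D with unbounded support on [0,∞), lim_{n→∞} E[X_{(2)}^n / X_{(1)}^n] = 1, where X_{(1)}^n and X_{(2)}^n are the largest and second-largest among n i.i.d. draws from D. -/

import Mathlib

open MeasureTheory Filter Real Topology
open scoped ENNReal NNReal

/-- The `r`-th largest value among `x 0, ..., x (n-1)` (equals `0` by convention
when `r > n` or `n = 0`). -/
noncomputable def kthLargest {n : ℕ} (x : Fin n → ℝ) (r : ℕ) : ℝ :=
  sSup {t : ℝ | r ≤ (Finset.univ.filter (fun i => t ≤ x i)).card}

/-- The joint distribution of `n` i.i.d. draws from `μ`. -/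
noncomputable def iidMeasure (μ : Measure ℝ) [SigmaFinite μ] (n : ℕ) : Measure (Fin n → ℝ) :=
  Measure.pi fun _ => μ

/-- `E[X_{(k+1)} / X_{(1)}]` for `n` i.i.d. draws from `μ` (the ratio is `0` when
`X_{(1)} = 0`, by the division-by-zero convention). -/
noncomputable def ratioExp (μ : Measure ℝ) [SigmaFinite μ] (n k : ℕ) : ℝ :=
  ∫ x, kthLargest x (k + 1) / kthLargest x 1 ∂(iidMeasure μ n)

/-- off-diagonal pairs -/
def offD (n : ℕ) : Finset (Fin n × Fin n) := Finset.univ.filter (fun p => p.1 ≠ p.2)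

lemma offD_nonempty {n : ℕ} (hn : 2 ≤ n) : (offD n).Nonempty := by
  refine ⟨(⟨0, by omega⟩, ⟨1, by omega⟩), ?_⟩
  simp [offD, Fin.ext_iff]

lemma kth1_eq {n : ℕ} (hn : (Finset.univ : Finset (Fin n)).Nonempty) (x : Fin n → ℝ) :
    kthLargest x 1 = Finset.univ.sup' hn x := by
  have h : {t : ℝ | 1 ≤ (Finset.univ.filter (fun i => t ≤ x i)).card}
      = Set.Iic (Finset.univ.sup' hn x) := by
    ext t
    simp only [Set.mem_setOf_eq, Set.mem_Iic]
    constructor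
    · intro h
      obtain ⟨i, hi⟩ := Finset.card_pos.mp h
      have := (Finset.mem_filter.mp hi).2
      exact this.trans (Finset.le_sup' x (Finset.mem_univ i))
    · intro h
      obtain ⟨i, -, hi⟩ := Finset.exists_mem_eq_sup' hn x
      refine Finset.card_pos.mpr ⟨i, Finset.mem_filter.mpr ⟨Finset.mem_univ i, ?_⟩⟩
      exact h.trans hi.le
  rw [kthLargest, h, csSup_Iic]

lemma kth2_eq {n : ℕ} (hn : 2 ≤ n) (x : Fin n → ℝ) :
    kthLargest x 2 = (offD n).sup' (offD_nonempty hn) (fun p => min (x p.1) (x p.2)) := by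
  have h : {t : ℝ | 2 ≤ (Finset.univ.filter (fun i => t ≤ x i)).card}
      = Set.Iic ((offD n).sup' (offD_nonempty hn) (fun p => min (x p.1) (x p.2))) := by
    ext t
    simp only [Set.mem_setOf_eq, Set.mem_Iic]
    constructor
    · intro h
      obtain ⟨i, hi, j, hj, hij⟩ := Finset.one_lt_card.mp h
      have hxi := (Finset.mem_filter.mp hi).2
      have hxj := (Finset.mem_filter.mp hj).2
      have hmem : (i, j) ∈ offD n := by simp [offD, hij]
      calc t ≤ min (x i) (x j) := le_min hxi hxj
        _ ≤ _ := Finset.le_sup' (fun p => min (x p.1) (x p.2)) hmem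
    · intro h
      obtain ⟨p, hp, hps⟩ := Finset.exists_mem_eq_sup' (offD_nonempty hn)
        (fun p => min (x p.1) (x p.2))
      rw [hps] at h
      have hne : p.1 ≠ p.2 := by simpa [offD] using hp
      refine Finset.one_lt_card.mpr ⟨p.1, ?_, p.2, ?_, hne⟩
      · exact Finset.mem_filter.mpr ⟨Finset.mem_univ _, h.trans (min_le_left _ _)⟩
      · exact Finset.mem_filter.mpr ⟨Finset.mem_univ _, h.trans (min_le_right _ _)⟩
  rw [kthLargest, h, csSup_Iic]

lemma measurable_finset_sup' {ι δ : Type*} [MeasurableSpace δ] (s : Finset ι) (hs : s.Nonempty)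
    (f : ι → δ → ℝ) (hf : ∀ i, Measurable (f i)) :
    Measurable (fun a => s.sup' hs (fun i => f i a)) := by
  induction hs using Finset.Nonempty.cons_induction with
  | singleton i => simpa using hf i
  | cons i s his hs ih =>
    simp only [Finset.sup'_cons hs]
    exact (hf i).sup ih

section CDFLemmas

variable (μ : Measure ℝ) [IsProbabilityMeasure μ]

lemma Iic_zero_eq (hpos : μ (Set.Iio 0) = 0) (hz : μ {(0:ℝ)} = 0) : μ (Set.Iic 0) = 0 := by
  refine le_antisymm ?_ zero_le
  calc μ (Set.Iic 0) ≤ μ (Set.Iio 0 ∪ {0}) := by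
        refine measure_mono fun a ha => ?_
        rcases lt_or_eq_of_le (show a ≤ 0 from ha) with h | h
        · exact Or.inl h
        · exact Or.inr h
    _ ≤ μ (Set.Iio 0) + μ {0} := measure_union_le _ _
    _ = 0 := by rw [hpos, hz, add_zero]

lemma Ioi_zero_eq (hpos : μ (Set.Iio 0) = 0) (hz : μ {(0:ℝ)} = 0) : μ (Set.Ioi 0) = 1 := by
  have : Set.Ioi (0:ℝ) = (Set.Iic 0)ᶜ := by simp
  rw [this, measure_compl measurableSet_Iic (measure_ne_top μ _), Iic_zero_eq μ hpos hz,
    measure_univ, tsub_zero]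

lemma tail_bound (hpos : μ (Set.Iio 0) = 0) (hcont : ∀ a : ℝ, μ {a} = 0)
    {c : ℝ} (hc0 : 0 < c) :
    μ {a : ℝ | 1 - c ≤ (μ (Set.Iic a)).toReal} ≤ ENNReal.ofReal c := by
  rcases le_or_gt 1 c with h1 | h1
  · calc μ _ ≤ 1 := prob_le_one
      _ ≤ ENNReal.ofReal c := by
        rw [← ENNReal.ofReal_one]; exact ENNReal.ofReal_le_ofReal h1
  set S := {a : ℝ | 1 - c ≤ (μ (Set.Iic a)).toReal} with hS
  rcases S.eq_empty_or_nonempty with hSe | hSe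
  · rw [hSe]; simp
  have hu : 0 < 1 - c := by linarith
  have hbdd : BddBelow S := by
    refine ⟨0, fun a ha => ?_⟩
    by_contra h
    push_neg at h
    have : μ (Set.Iic a) = 0 :=
      measure_mono_null (fun t ht => lt_of_le_of_lt (ht : t ≤ a) h) hpos
    rw [hS, Set.mem_setOf_eq, this] at ha
    simp at ha
    linarith
  set s := sInf S with hsdef
  have key : ENNReal.ofReal (1 - c) ≤ μ (Set.Iic s) := by
    have hIic : Set.Iic s = ⋂ k : ℕ, Set.Iic (s + ((k:ℝ)+1)⁻¹) := by
      ext a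
      simp only [Set.mem_Iic, Set.mem_iInter]
      constructor
      · intro h k
        have : (0:ℝ) < ((k:ℝ)+1)⁻¹ := by positivity
        linarith
      · intro h
        by_contra hlt
        push_neg at hlt
        obtain ⟨k, hk⟩ := exists_nat_one_div_lt (show (0:ℝ) < a - s by linarith)
        have := h k
        rw [one_div] at hk
        linarith
    rw [hIic]
    have htend : Tendsto (fun k : ℕ => μ (Set.Iic (s + ((k:ℝ)+1)⁻¹))) atTop
        (𝓝 (μ (⋂ k : ℕ, Set.Iic (s + ((k:ℝ)+1)⁻¹)))) := by
      have := tendsto_measure_iInter_atTop (μ := μ)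
        (s := fun k : ℕ => Set.Iic (s + ((k:ℝ)+1)⁻¹))
        (fun k => measurableSet_Iic.nullMeasurableSet)
        (fun i j hij => Set.Iic_subset_Iic.mpr (by
          have : ((j:ℝ)+1)⁻¹ ≤ ((i:ℝ)+1)⁻¹ := by
            apply inv_anti₀ (by positivity)
            exact_mod_cast add_le_add_left (Nat.cast_le.mpr hij) 1
          linarith))
        ⟨0, measure_ne_top μ _⟩
      exact this
    refine ge_of_tendsto htend (Eventually.of_forall fun k => ?_)
    obtain ⟨a, haS, halt⟩ := Real.lt_sInf_add_pos hSe
      (show (0:ℝ) < ((k:ℝ)+1)⁻¹ by positivity)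
    calc ENNReal.ofReal (1 - c) ≤ ENNReal.ofReal ((μ (Set.Iic a)).toReal) :=
          ENNReal.ofReal_le_ofReal haS
      _ = μ (Set.Iic a) := ENNReal.ofReal_toReal (measure_ne_top μ _)
      _ ≤ μ (Set.Iic (s + ((k:ℝ)+1)⁻¹)) := measure_mono (Set.Iic_subset_Iic.mpr halt.le)
  have hIio : μ (Set.Iic s) ≤ μ (Set.Iio s) := by
    calc μ (Set.Iic s) ≤ μ (Set.Iio s ∪ {s}) := by
          refine measure_mono fun a ha => ?_
          rcases lt_or_eq_of_le (show a ≤ s from ha) with h | h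
          · exact Or.inl h
          · exact Or.inr h
      _ ≤ μ (Set.Iio s) + μ {s} := measure_union_le _ _
      _ = μ (Set.Iio s) := by rw [hcont s, add_zero]
  calc μ S ≤ μ (Set.Ici s) := measure_mono fun a ha => csInf_le hbdd ha
    _ = 1 - μ (Set.Iio s) := by
        rw [show Set.Ici s = (Set.Iio s)ᶜ by simp,
          measure_compl measurableSet_Iio (measure_ne_top μ _), measure_univ]
    _ ≤ 1 - ENNReal.ofReal (1 - c) := by
        exact tsub_le_tsub le_rfl (le_trans key hIio)
    _ = ENNReal.ofReal c := by
        rw [← ENNReal.ofReal_one, ← ENNReal.ofReal_sub _ (by linarith : (0:ℝ) ≤ 1 - c)]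
        norm_num

lemma mhr_ineq (hpos : μ (Set.Iio 0) = 0) (hz : μ {(0:ℝ)} = 0)
    (hunbdd : ∀ t : ℝ, (μ (Set.Iic t)).toReal < 1)
    (hMHR : ConcaveOn ℝ (Set.Ici 0) (fun x => Real.log (1 - (μ (Set.Iic x)).toReal)))
    {e' a : ℝ} (he0 : 0 ≤ e') (he1 : e' ≤ 1) (ha : 0 ≤ a) :
    (μ (Set.Iic (e' * a))).toReal ≤ 1 - (1 - (μ (Set.Iic a)).toReal) ^ e' := by
  have hq : ∀ t : ℝ, 0 < 1 - (μ (Set.Iic t)).toReal := fun t => by linarith [hunbdd t]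
  have h0 : (μ (Set.Iic (0:ℝ))).toReal = 0 := by rw [Iic_zero_eq μ hpos hz]; simp
  have hcc := hMHR.2 (Set.mem_Ici.mpr ha) (Set.mem_Ici.mpr (le_refl (0:ℝ))) he0
    (by linarith : (0:ℝ) ≤ 1 - e') (by ring)
  simp only [smul_eq_mul, mul_zero, add_zero, h0, sub_zero, Real.log_one] at hcc
  -- hcc : e' * log (1 - F a) ≤ log (1 - F (e' * a))
  have hrw : (1 - (μ (Set.Iic a)).toReal) ^ e' ≤ 1 - (μ (Set.Iic (e' * a))).toReal := by
    rw [← Real.exp_log (hq (e' * a)), Real.rpow_def_of_pos (hq a)]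
    exact Real.exp_le_exp.mpr (by rw [mul_comm] at hcc ⊢; linarith)
  linarith

end CDFLemmas

section BadSet

def badSet (e' : ℝ) (N : ℕ) : Set (Fin N → ℝ) :=
  {x | ∃ i, 0 < x i ∧ ∀ j, j ≠ i → x j ≤ e' * x i}

lemma badSet_measurable (e' : ℝ) (N : ℕ) : MeasurableSet (badSet e' N) := by
  have : badSet e' N = ⋃ i, ({x : Fin N → ℝ | 0 < x i} ∩
      ⋂ j, ⋂ (_ : j ≠ i), {x : Fin N → ℝ | x j ≤ e' * x i}) := by
    ext x
    simp [badSet, Set.mem_iInter]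
  rw [this]
  refine MeasurableSet.iUnion fun i => (MeasurableSet.inter ?_ ?_)
  · exact measurableSet_lt measurable_const (measurable_pi_apply i)
  · exact MeasurableSet.iInter fun j => MeasurableSet.iInter fun _ =>
      measurableSet_le (measurable_pi_apply j) (measurable_const.mul (measurable_pi_apply i))

lemma F_measurable (μ : Measure ℝ) [IsProbabilityMeasure μ] :
    Measurable (fun a : ℝ => (μ (Set.Iic a)).toReal) := by
  refine Monotone.measurable fun a b hab => ?_
  exact ENNReal.toReal_mono (measure_ne_top μ _) (measure_mono (Set.Iic_subset_Iic.mpr hab))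

lemma slice_bound (μ : Measure ℝ) [IsProbabilityMeasure μ]
    (hpos : μ (Set.Iio 0) = 0) (hcont : ∀ a : ℝ, μ {a} = 0)
    (hunbdd : ∀ t : ℝ, (μ (Set.Iic t)).toReal < 1)
    (hMHR : ConcaveOn ℝ (Set.Ici 0) (fun x => Real.log (1 - (μ (Set.Iic x)).toReal)))
    {e' c : ℝ} (he0 : 0 < e') (he1 : e' < 1) (hc0 : 0 < c) (hc1 : c < 1)
    (n : ℕ) (i : Fin (n + 1)) :
    iidMeasure μ (n+1) {x | 0 < x i ∧ ∀ j, j ≠ i → x j ≤ e' * x i}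
      ≤ ENNReal.ofReal c + ENNReal.ofReal ((1 - c ^ e') ^ n) := by
  classical
  haveI hsf : SFinite (Measure.pi fun _ : Fin n => μ) := inferInstance
  set ν : Measure (Fin n → ℝ) := Measure.pi fun _ : Fin n => μ with hν
  have mp := measurePreserving_piFinSuccAbove (fun _ : Fin (n+1) => μ) i
  set t : Set (ℝ × (Fin n → ℝ)) := {p | 0 < p.1 ∧ ∀ j, p.2 j ≤ e' * p.1} with htdef
  have ht : MeasurableSet t := by
    have : t = {p : ℝ × (Fin n → ℝ) | 0 < p.1} ∩ ⋂ j : Fin n, {p | p.2 j ≤ e' * p.1} := by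
      ext p; simp [htdef, Set.mem_iInter]
    rw [this]
    exact (measurableSet_lt measurable_const measurable_fst).inter
      (MeasurableSet.iInter fun j => measurableSet_le
        (measurable_snd.eval) (measurable_const.mul measurable_fst))
  have hpre : {x : Fin (n+1) → ℝ | 0 < x i ∧ ∀ j, j ≠ i → x j ≤ e' * x i}
      = (MeasurableEquiv.piFinSuccAbove (fun _ : Fin (n+1) => ℝ) i) ⁻¹' t := by
    ext x
    simp only [Set.mem_preimage, MeasurableEquiv.piFinSuccAbove_apply, htdef,
      Set.mem_setOf_eq, Fin.removeNth]
    constructor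
    · rintro ⟨h1, h2⟩
      exact ⟨h1, fun j => h2 _ (Fin.succAbove_ne i j)⟩
    · rintro ⟨h1, h2⟩
      refine ⟨h1, fun j hj => ?_⟩
      obtain ⟨k, rfl⟩ := Fin.exists_succAbove_eq hj
      exact h2 k
  have hmeq : iidMeasure μ (n+1) {x | 0 < x i ∧ ∀ j, j ≠ i → x j ≤ e' * x i}
      = (μ.prod ν) t := by
    rw [hpre]
    exact mp.measure_preimage ht.nullMeasurableSet
  rw [hmeq, Measure.prod_apply ht]
  set A := {a : ℝ | 1 - c ≤ (μ (Set.Iic a)).toReal} with hAdef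
  have hA : MeasurableSet A := measurableSet_le measurable_const (F_measurable μ)
  have hcle : (0:ℝ) ≤ 1 - c ^ e' := by
    have : c ^ e' ≤ 1 := Real.rpow_le_one hc0.le hc1.le he0.le
    linarith
  have hslice : ∀ a : ℝ, ν (Prod.mk a ⁻¹' t)
      ≤ A.indicator (1 : ℝ → ℝ≥0∞) a + ENNReal.ofReal ((1 - c ^ e') ^ n) := by
    intro a
    rcases le_or_gt a 0 with ha | ha
    · have : Prod.mk a ⁻¹' t = ∅ := by
        ext y; simp only [Set.mem_preimage, htdef, Set.mem_setOf_eq, Set.mem_empty_iff_false,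
          iff_false, not_and]
        intro h; linarith
      simp [this]
    · have hpre2 : Prod.mk a ⁻¹' t = Set.univ.pi (fun _ : Fin n => Set.Iic (e' * a)) := by
        ext y
        simp [htdef, ha, Set.mem_pi, Pi.le_def]
      rw [hpre2, hν, Measure.pi_pi, Finset.prod_const, Finset.card_univ,
        Fintype.card_fin]
      by_cases hmem : a ∈ A
      · calc (μ (Set.Iic (e' * a))) ^ n ≤ 1 ^ n := by gcongr; exact prob_le_one
          _ = A.indicator (1 : ℝ → ℝ≥0∞) a := by
              simp [Set.indicator_of_mem hmem]
          _ ≤ _ := le_self_add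
      · have hFa : (μ (Set.Iic a)).toReal < 1 - c := by
          rw [hAdef, Set.mem_setOf_eq, not_le] at hmem; exact hmem
        have h2 : c ^ e' ≤ (1 - (μ (Set.Iic a)).toReal) ^ e' :=
          Real.rpow_le_rpow hc0.le (by linarith) he0.le
        have h3 : (μ (Set.Iic (e' * a))).toReal ≤ 1 - c ^ e' := by
          have := mhr_ineq μ hpos (hcont 0) hunbdd hMHR he0.le he1.le ha.le
          linarith
        have h4 : μ (Set.Iic (e' * a)) ≤ ENNReal.ofReal (1 - c ^ e') := by
          rw [← ENNReal.ofReal_toReal (measure_ne_top μ (Set.Iic (e' * a)))]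
          exact ENNReal.ofReal_le_ofReal h3
        calc (μ (Set.Iic (e' * a))) ^ n ≤ (ENNReal.ofReal (1 - c ^ e')) ^ n := by gcongr
          _ = ENNReal.ofReal ((1 - c ^ e') ^ n) := (ENNReal.ofReal_pow hcle n).symm
          _ ≤ _ := le_add_self
  calc ∫⁻ a, ν (Prod.mk a ⁻¹' t) ∂μ
      ≤ ∫⁻ a, (A.indicator (1 : ℝ → ℝ≥0∞) a + ENNReal.ofReal ((1 - c ^ e') ^ n)) ∂μ :=
        lintegral_mono hslice
    _ = μ A + ENNReal.ofReal ((1 - c ^ e') ^ n) := by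
        rw [lintegral_add_right _ measurable_const, lintegral_indicator_one hA,
          lintegral_const, measure_univ, mul_one]
    _ ≤ ENNReal.ofReal c + ENNReal.ofReal ((1 - c ^ e') ^ n) := by
        exact add_le_add_left (tail_bound μ hpos hcont hc0) _

lemma bad_measure_bound (μ : Measure ℝ) [IsProbabilityMeasure μ]
    (hpos : μ (Set.Iio 0) = 0) (hcont : ∀ a : ℝ, μ {a} = 0)
    (hunbdd : ∀ t : ℝ, (μ (Set.Iic t)).toReal < 1)
    (hMHR : ConcaveOn ℝ (Set.Ici 0) (fun x => Real.log (1 - (μ (Set.Iic x)).toReal)))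
    {e' c : ℝ} (he0 : 0 < e') (he1 : e' < 1) (hc0 : 0 < c) (hc1 : c < 1) (n : ℕ) :
    iidMeasure μ (n+1) (badSet e' (n+1))
      ≤ (n+1) * (ENNReal.ofReal c + ENNReal.ofReal ((1 - c ^ e') ^ n)) := by
  have hcover : badSet e' (n+1)
      = ⋃ i : Fin (n+1), {x : Fin (n+1) → ℝ | 0 < x i ∧ ∀ j, j ≠ i → x j ≤ e' * x i} := by
    ext x; simp [badSet]
  rw [hcover]
  calc iidMeasure μ (n+1) _
      ≤ ∑ i : Fin (n+1), iidMeasure μ (n+1)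
          {x : Fin (n+1) → ℝ | 0 < x i ∧ ∀ j, j ≠ i → x j ≤ e' * x i} :=
        measure_iUnion_fintype_le _ _
    _ ≤ ∑ _j : Fin (n+1), (ENNReal.ofReal c + ENNReal.ofReal ((1 - c ^ e') ^ n)) :=
        Finset.sum_le_sum fun i _ =>
          slice_bound μ hpos hcont hunbdd hMHR he0 he1 hc0 hc1 n i
    _ = (n+1) * (ENNReal.ofReal c + ENNReal.ofReal ((1 - c ^ e') ^ n)) := by
        rw [Finset.sum_const, Finset.card_univ, Fintype.card_fin, nsmul_eq_mul]
        norm_cast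

end BadSet

section Asymptotics

lemma seq_bound_tendsto {β e' : ℝ} (hβ1 : 1 < β) (he0 : 0 < e') (hβe : β * e' < 1) :
    Tendsto (fun N : ℕ => (N:ℝ) * (((N:ℝ)) ^ (-β) + (1 - ((N:ℝ) ^ (-β)) ^ e') ^ (N-1)))
      atTop (𝓝 0) := by
  set γ : ℝ := 1 - β * e' with hγdef
  have hγ : 0 < γ := by simp only [hγdef]; linarith
  have t1lim : Tendsto (fun N : ℕ => (N:ℝ) * (N:ℝ) ^ (-β)) atTop (𝓝 0) := by
    have h1 : Tendsto (fun x : ℝ => x ^ (1-β)) atTop (𝓝 0) := by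
      have := tendsto_rpow_neg_atTop (show 0 < β - 1 by linarith)
      simpa [neg_sub] using this
    have h2 := h1.comp (tendsto_natCast_atTop_atTop (R := ℝ))
    refine h2.congr' ?_
    filter_upwards [eventually_ge_atTop 1] with N hN
    have hx : (0:ℝ) < N := by exact_mod_cast hN
    simp only [Function.comp_apply]
    rw [show (1-β) = 1 + (-β) by ring, Real.rpow_add hx, Real.rpow_one]
  have t2lim : Tendsto (fun N : ℕ => (N:ℝ) * (1 - ((N:ℝ) ^ (-β)) ^ e') ^ (N-1))
      atTop (𝓝 0) := by
    have glim : Tendsto (fun N : ℕ => Real.exp (Real.log N - (N:ℝ) ^ γ / 2)) atTop (𝓝 0) := by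
      have hin : Tendsto (fun x : ℝ => Real.log x - x ^ γ / 2) atTop atBot := by
        have h4 := (isLittleO_log_rpow_atTop hγ).def (show (0:ℝ) < 1/4 by norm_num)
        have h5 : Tendsto (fun x : ℝ => -(x ^ γ) / 4) atTop atBot := by
          have h6 : Tendsto (fun x : ℝ => x ^ γ / 4) atTop atTop :=
            (tendsto_rpow_atTop hγ).atTop_div_const (by norm_num)
          have := tendsto_neg_atTop_atBot.comp h6
          simpa [Function.comp_def, neg_div] using this
        refine tendsto_atBot_mono' atTop ?_ h5
        filter_upwards [h4, eventually_ge_atTop (1:ℝ)] with x hx hx1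
        have hxpos : (0:ℝ) < x := by linarith
        have hlog : 0 ≤ Real.log x := Real.log_nonneg hx1
        have hrp : 0 ≤ x ^ γ := Real.rpow_nonneg hxpos.le _
        rw [Real.norm_eq_abs, Real.norm_eq_abs, abs_of_nonneg hlog, abs_of_nonneg hrp] at hx
        linarith
      exact (Real.tendsto_exp_atBot.comp hin).comp (tendsto_natCast_atTop_atTop (R := ℝ))
    have hle : ∀ᶠ N : ℕ in atTop,
        (N:ℝ) * (1 - ((N:ℝ) ^ (-β)) ^ e') ^ (N-1)
          ≤ Real.exp (Real.log N - (N:ℝ) ^ γ / 2) := by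
      filter_upwards [eventually_ge_atTop 2] with N hN
      set x : ℝ := (N:ℝ) with hxdef
      have hx2 : (2:ℝ) ≤ x := by rw [hxdef]; exact_mod_cast hN
      have hx1 : (1:ℝ) ≤ x := by linarith
      have hx0 : (0:ℝ) < x := by linarith
      set u : ℝ := (x ^ (-β)) ^ e' with hudef
      have hu_eq : u = x ^ (-(β * e')) := by
        rw [hudef, ← Real.rpow_mul hx0.le]; ring_nf
      have hu0 : 0 < u := by
        rw [hu_eq]; exact Real.rpow_pos_of_pos hx0 _
      have hβe0 : 0 < β * e' := mul_pos (by linarith) he0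
      have hu1 : u ≤ 1 := by
        rw [hu_eq]
        exact Real.rpow_le_one_of_one_le_of_nonpos hx1 (by linarith)
      have hstep1 : (1 - u) ^ (N-1) ≤ Real.exp (-u) ^ (N-1) := by
        apply pow_le_pow_left₀ (by linarith)
        linarith [Real.add_one_le_exp (-u)]
      have hstep2 : Real.exp (-u) ^ (N-1) = Real.exp (-(((N-1 : ℕ):ℝ) * u)) := by
        rw [← Real.exp_nat_mul]; ring_nf
      have hNm1 : ((N-1 : ℕ):ℝ) = x - 1 := by
        rw [Nat.cast_sub (by omega : 1 ≤ N)]; simp [hxdef]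
      have hkey : x ^ γ / 2 ≤ ((N-1 : ℕ):ℝ) * u := by
        rw [hNm1]
        have h8 : x ^ γ = x * x ^ (-(β * e')) := by
          rw [show γ = 1 + -(β * e') by rw [hγdef]; ring, Real.rpow_add hx0, Real.rpow_one]
        have h9 : x / 2 ≤ x - 1 := by linarith
        calc x ^ γ / 2 = (x / 2) * x ^ (-(β * e')) := by rw [h8]; ring
          _ ≤ (x - 1) * x ^ (-(β * e')) := by
              apply mul_le_mul_of_nonneg_right h9 (Real.rpow_nonneg hx0.le _)
          _ = (x - 1) * u := by rw [hu_eq]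
      calc x * (1 - u) ^ (N-1) ≤ x * Real.exp (-(((N-1 : ℕ):ℝ) * u)) := by
            rw [← hstep2]; exact mul_le_mul_of_nonneg_left hstep1 hx0.le
        _ ≤ x * Real.exp (-(x ^ γ / 2)) := by
            apply mul_le_mul_of_nonneg_left _ hx0.le
            exact Real.exp_le_exp.mpr (by linarith)
        _ = Real.exp (Real.log x - x ^ γ / 2) := by
            rw [show Real.log x - x ^ γ / 2 = Real.log x + -(x ^ γ / 2) by ring,
              Real.exp_add, Real.exp_log hx0]
    have hge : ∀ᶠ N : ℕ in atTop,
        0 ≤ (N:ℝ) * (1 - ((N:ℝ) ^ (-β)) ^ e') ^ (N-1) := by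
      filter_upwards [eventually_ge_atTop 1] with N hN
      have hx1 : (1:ℝ) ≤ (N:ℝ) := by exact_mod_cast hN
      have hx0 : (0:ℝ) < (N:ℝ) := by linarith
      have hu1 : ((N:ℝ) ^ (-β)) ^ e' ≤ 1 := by
        apply Real.rpow_le_one (Real.rpow_nonneg hx0.le _) _ he0.le
        exact Real.rpow_le_one_of_one_le_of_nonpos hx1 (by linarith)
      exact mul_nonneg hx0.le (pow_nonneg (by linarith) _)
    exact squeeze_zero' hge hle glim
  have := t1lim.add t2lim
  simp only [add_zero] at this
  refine this.congr fun N => by ring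
end Asymptotics

section Main

instance iid_prob (μ : Measure ℝ) [IsProbabilityMeasure μ] (n : ℕ) :
    IsProbabilityMeasure (iidMeasure μ n) := by
  unfold iidMeasure; infer_instance

lemma bad_toReal_tendsto (μ : Measure ℝ) [IsProbabilityMeasure μ]
    (hpos : μ (Set.Iio 0) = 0) (hcont : ∀ a : ℝ, μ {a} = 0)
    (hunbdd : ∀ t : ℝ, (μ (Set.Iic t)).toReal < 1)
    (hMHR : ConcaveOn ℝ (Set.Ici 0) (fun x => Real.log (1 - (μ (Set.Iic x)).toReal)))
    {e' : ℝ} (he0 : 0 < e') (he1 : e' < 1) :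
    Tendsto (fun N : ℕ => (iidMeasure μ N (badSet e' N)).toReal) atTop (𝓝 0) := by
  set β : ℝ := (1 + 1/e')/2 with hβdef
  have hinv : 1 < 1/e' := by rw [lt_div_iff₀ he0]; linarith
  have hβ1 : 1 < β := by rw [hβdef]; linarith
  have hβe : β * e' < 1 := by
    have h0 : β * e' = (e' + 1)/2 := by
      rw [hβdef]; field_simp
    rw [h0]; linarith
  set b : ℕ → ℝ := fun N => (N:ℝ) * (((N:ℝ)) ^ (-β) + (1 - ((N:ℝ) ^ (-β)) ^ e') ^ (N-1))
    with hbdef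
  have hblim : Tendsto b atTop (𝓝 0) := seq_bound_tendsto hβ1 he0 hβe
  refine squeeze_zero' (Eventually.of_forall fun N => ENNReal.toReal_nonneg) ?_ hblim
  filter_upwards [eventually_ge_atTop 2] with N hN
  set c : ℝ := (N:ℝ) ^ (-β) with hcdef
  have hx1 : (1:ℝ) < (N:ℝ) := by exact_mod_cast (by omega : 1 < N)
  have hc0 : 0 < c := Real.rpow_pos_of_pos (by linarith) _
  have hc1 : c < 1 := Real.rpow_lt_one_of_one_lt_of_neg hx1 (by linarith)
  obtain ⟨n, rfl⟩ : ∃ n, N = n + 1 := ⟨N - 1, by omega⟩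
  have hbound := bad_measure_bound μ hpos hcont hunbdd hMHR he0 he1 hc0 hc1 n
  have hd0 : (0:ℝ) ≤ (1 - c ^ e') ^ n := by
    apply pow_nonneg
    have : c ^ e' ≤ 1 := Real.rpow_le_one hc0.le hc1.le he0.le
    linarith
  have hrw : ((n:ℝ≥0∞)+1) * (ENNReal.ofReal c + ENNReal.ofReal ((1 - c ^ e') ^ n))
      = ENNReal.ofReal (b (n+1)) := by
    rw [← ENNReal.ofReal_add hc0.le hd0, hbdef]
    have hnat : ((n:ℝ≥0∞)+1) = ENNReal.ofReal ((n:ℝ)+1) := by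
      rw [ENNReal.ofReal_add (by positivity) zero_le_one]
      simp [ENNReal.ofReal_natCast]
    rw [hnat, ← ENNReal.ofReal_mul (by positivity)]
    congr 1
    simp only [Nat.add_sub_cancel, hcdef]
    push_cast
    ring
  rw [hrw] at hbound
  refine ENNReal.toReal_le_of_le_ofReal ?_ hbound
  rw [hbdef]
  apply mul_nonneg (by positivity)
  apply add_nonneg (Real.rpow_nonneg (by positivity) _)
  apply pow_nonneg
  have hceq : ((n+1:ℕ):ℝ) ^ (-β) = c := by rw [hcdef]
  rw [hceq]
  have : c ^ e' ≤ 1 := Real.rpow_le_one hc0.le hc1.le he0.le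
  linarith

end Main

lemma ratioExp_bounds (μ : Measure ℝ) [IsProbabilityMeasure μ]
    (hpos : μ (Set.Iio 0) = 0) (hcont : ∀ a : ℝ, μ {a} = 0)
    {e' : ℝ} (he0 : 0 < e') (he1 : e' ≤ 1) {N : ℕ} (hN : 2 ≤ N) :
    ratioExp μ N 1 ≤ 1 ∧
      e' * (1 - (iidMeasure μ N (badSet e' N)).toReal) ≤ ratioExp μ N 1 := by
  classical
  haveI : NeZero N := ⟨by omega⟩
  set ν := iidMeasure μ N with hν
  have hn1 : (Finset.univ : Finset (Fin N)).Nonempty :=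
    ⟨⟨0, by omega⟩, Finset.mem_univ _⟩
  set E : Set (Fin N → ℝ) := {x | ∀ i, 0 < x i} with hEdef
  have hEmeas : MeasurableSet E := by
    have : E = ⋂ i : Fin N, {x : Fin N → ℝ | 0 < x i} := by
      ext x; simp [hEdef, Set.mem_iInter]
    rw [this]
    exact MeasurableSet.iInter fun i =>
      measurableSet_lt measurable_const (measurable_pi_apply i)
  have hEone : ν E = 1 := by
    have hpi : E = Set.univ.pi (fun _ : Fin N => Set.Ioi (0:ℝ)) := by
      ext x; simp [hEdef, Set.mem_pi]
    rw [hpi, hν, iidMeasure, Measure.pi_pi]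
    simp [Ioi_zero_eq μ hpos (hcont 0)]
  have hEc : ν Eᶜ = 0 := by
    rw [measure_compl hEmeas (measure_ne_top _ _), measure_univ, hEone, tsub_self]
  have hae : ∀ᵐ x ∂ν, x ∈ E := by
    rw [ae_iff]
    exact hEc
  -- pointwise facts
  have hM : ∀ x ∈ E, 0 < kthLargest x 1 := by
    intro x hx
    rw [kth1_eq hn1]
    obtain ⟨i₀, hi₀⟩ := hn1
    exact lt_of_lt_of_le (hx i₀) (Finset.le_sup' x hi₀)
  have hS2nn : ∀ x ∈ E, 0 ≤ kthLargest x 2 := by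
    intro x hx
    rw [kth2_eq hN]
    obtain ⟨p, hp⟩ := offD_nonempty hN
    calc (0:ℝ) ≤ min (x p.1) (x p.2) := le_min (hx p.1).le (hx p.2).le
      _ ≤ _ := Finset.le_sup' (fun p => min (x p.1) (x p.2)) hp
  have hS2le : ∀ x : Fin N → ℝ, kthLargest x 2 ≤ kthLargest x 1 := by
    intro x
    rw [kth2_eq hN, kth1_eq hn1]
    apply Finset.sup'_le
    intro p _
    exact le_trans (min_le_left _ _) (Finset.le_sup' x (Finset.mem_univ p.1))
  have hf01 : ∀ x ∈ E, 0 ≤ kthLargest x 2 / kthLargest x 1 ∧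
      kthLargest x 2 / kthLargest x 1 ≤ 1 := by
    intro x hx
    constructor
    · exact div_nonneg (hS2nn x hx) (hM x hx).le
    · rw [div_le_one (hM x hx)]
      exact hS2le x
  -- measurability and integrability
  have hm1 : Measurable fun x : Fin N → ℝ => kthLargest x 1 := by
    have h : (fun x : Fin N → ℝ => kthLargest x 1)
        = fun x => Finset.univ.sup' hn1 (fun i => x i) := funext fun x => kth1_eq hn1 x
    rw [h]
    exact measurable_finset_sup' _ hn1 _ (fun i => measurable_pi_apply i)
  have hm2 : Measurable fun x : Fin N → ℝ => kthLargest x 2 := by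
    have h : (fun x : Fin N → ℝ => kthLargest x 2)
        = fun x => (offD N).sup' (offD_nonempty hN) (fun p => min (x p.1) (x p.2)) :=
      funext fun x => kth2_eq hN x
    rw [h]
    exact measurable_finset_sup' _ (offD_nonempty hN) _
      (fun p => (measurable_pi_apply p.1).min (measurable_pi_apply p.2))
  have hfm : Measurable fun x : Fin N → ℝ => kthLargest x 2 / kthLargest x 1 := hm2.div hm1
  have hint : Integrable (fun x => kthLargest x 2 / kthLargest x 1) ν := by
    refine Integrable.mono' (integrable_const (1:ℝ)) hfm.aestronglyMeasurable ?_
    filter_upwards [hae] with x hx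
    rw [Real.norm_eq_abs, abs_of_nonneg (hf01 x hx).1]
    exact (hf01 x hx).2
  have hRE : ratioExp μ N 1 = ∫ x, kthLargest x 2 / kthLargest x 1 ∂ν := by
    rw [ratioExp, hν]
  constructor
  · rw [hRE]
    calc ∫ x, kthLargest x 2 / kthLargest x 1 ∂ν ≤ ∫ _, (1:ℝ) ∂ν := by
          refine integral_mono_ae hint (integrable_const 1) ?_
          filter_upwards [hae] with x hx using (hf01 x hx).2
      _ = 1 := by simp
  · set G : Set (Fin N → ℝ) := E ∩ (badSet e' N)ᶜ with hGdef
    have hGmeas : MeasurableSet G := hEmeas.inter (badSet_measurable e' N).compl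
    have hgle : ∀ᵐ x ∂ν, G.indicator (fun _ => e') x ≤ kthLargest x 2 / kthLargest x 1 := by
      filter_upwards [hae] with x hx
      by_cases hxG : x ∈ G
      · rw [Set.indicator_of_mem hxG]
        have hxbad : x ∉ badSet e' N := hxG.2
        rw [badSet, Set.mem_setOf_eq] at hxbad
        push_neg at hxbad
        obtain ⟨i₀, hi₀mem, hi₀⟩ := Finset.exists_mem_eq_sup' hn1 x
        obtain ⟨j, hjne, hjgt⟩ := hxbad i₀ (hx i₀)
        have hpair : (i₀, j) ∈ offD N := by simp [offD, Ne.symm hjne]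
        have hmin : e' * x i₀ ≤ min (x i₀) (x j) := by
          apply le_min _ hjgt.le
          nlinarith [hx i₀]
        have hkth2 : e' * kthLargest x 1 ≤ kthLargest x 2 := by
          rw [kth2_eq hN, kth1_eq hn1, hi₀]
          exact le_trans hmin (Finset.le_sup' (fun p => min (x p.1) (x p.2)) hpair)
        rw [le_div_iff₀ (hM x hx)]
        exact hkth2
      · rw [Set.indicator_of_notMem hxG]
        exact (hf01 x hx).1
    have hgint : Integrable (G.indicator (fun _ => e')) ν :=
      (integrable_const e').indicator hGmeas
    have hstep : ∫ x, G.indicator (fun _ => e') x ∂ν ≤ ratioExp μ N 1 := by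
      rw [hRE]
      exact integral_mono_ae hgint hint hgle
    have hGval : ∫ x, G.indicator (fun _ => e') x ∂ν = (ν G).toReal * e' := by
      rw [integral_indicator_const e' hGmeas, smul_eq_mul]; rfl
    have hGcompl : ν Gᶜ ≤ ν (badSet e' N) := by
      rw [hGdef, Set.compl_inter, compl_compl]
      calc ν (Eᶜ ∪ badSet e' N) ≤ ν Eᶜ + ν (badSet e' N) := measure_union_le _ _
        _ = ν (badSet e' N) := by rw [hEc, zero_add]
    have hsum : (ν G).toReal + (ν Gᶜ).toReal = 1 := by
      rw [← ENNReal.toReal_add (measure_ne_top _ _) (measure_ne_top _ _),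
        measure_add_measure_compl hGmeas, measure_univ]
      rfl
    have h3 : (ν Gᶜ).toReal ≤ (ν (badSet e' N)).toReal :=
      ENNReal.toReal_mono (measure_ne_top _ _) hGcompl
    have h4 : 1 - (ν (badSet e' N)).toReal ≤ (ν G).toReal := by linarith
    calc e' * (1 - (ν (badSet e' N)).toReal) ≤ e' * (ν G).toReal :=
          mul_le_mul_of_nonneg_left h4 he0.le
      _ = (ν G).toReal * e' := mul_comm _ _
      _ = ∫ x, G.indicator (fun _ => e') x ∂ν := hGval.symm
      _ ≤ ratioExp μ N 1 := hstep

theorem stmt13 (μ : Measure ℝ) [IsProbabilityMeasure μ] (hpos : μ (Set.Iio 0) = 0)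
    (hcont : ∀ a : ℝ, μ {a} = 0)
    (hunbdd : ∀ t : ℝ, (μ (Set.Iic t)).toReal < 1)
    (hMHR : ConcaveOn ℝ (Set.Ici 0) (fun x => Real.log (1 - (μ (Set.Iic x)).toReal))) :
    Tendsto (fun n : ℕ => ratioExp μ n 1) atTop (nhds 1) := by
  rw [show (nhds (1:ℝ)) = 𝓝 1 from rfl]
  rw [tendsto_order]
  constructor
  · intro a ha
    set e' : ℝ := max (1/2) ((a+1)/2) with he'def
    have he0 : 0 < e' := lt_of_lt_of_le (by norm_num) (le_max_left _ _)
    have he1 : e' < 1 := by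
      rw [he'def]
      apply max_lt (by norm_num)
      linarith
    have hae' : a < e' := lt_of_lt_of_le (by linarith : a < (a+1)/2) (le_max_right _ _)
    have hbad := bad_toReal_tendsto μ hpos hcont hunbdd hMHR he0 he1
    have hev : ∀ᶠ N : ℕ in atTop,
        (iidMeasure μ N (badSet e' N)).toReal < (e' - a) / e' :=
      hbad.eventually_lt_const (div_pos (by linarith) he0)
    filter_upwards [eventually_ge_atTop 2, hev] with N hN2 hPN
    have hlow := (ratioExp_bounds μ hpos hcont he0 he1.le hN2).2
    have : a < e' * (1 - (iidMeasure μ N (badSet e' N)).toReal) := by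
      have h5 : e' * ((e' - a) / e') = e' - a := by field_simp
      nlinarith [ENNReal.toReal_nonneg (a := iidMeasure μ N (badSet e' N))]
    linarith
  · intro a ha
    filter_upwards [eventually_ge_atTop 2] with N hN2
    have := (ratioExp_bounds μ hpos hcont (e' := 1/2) (by norm_num) (by norm_num) hN2).1
    linarith
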